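/- The transfer matrices of the five vertex model commute: for every α ∈ ℂ, every M ≥ 1, all nonzero inhomogeneity parameters w₁,…,w_M ∈ ℂ, and all nonzero u, v ∈ ℂ, one has τ(u,{w}) τ(v,{w}) = τ(v,{w}) τ(u,{w}) as endomorphisms of (ℂ²)^{⊗M}. -/

import Mathlib

open Matrix
open scoped Kronecker BigOperators

noncomputable section

def sM : Matrix (Fin 2) (Fin 2) ℂ := !![1, 0; 0, 0]
def nM : Matrix (Fin 2) (Fin 2) ℂ := !![0, 0; 0, 1]
def sigP : Matrix (Fin 2) (Fin 2) ℂ := !![0, 1; 0, 0]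
def sigM : Matrix (Fin 2) (Fin 2) ℂ := !![0, 0; 1, 0]

/-- The L-operator of the one-parameter family of five vertex models:
`L(u) = u·s⊗s + σ⁻⊗σ⁺ + σ⁺⊗σ⁻ + (αu−u⁻¹)·n⊗s + αu·n⊗n`, with the first factor the
auxiliary space and the second one the quantum space. -/
def Lmat (α u : ℂ) : Matrix (Fin 2 × Fin 2) (Fin 2 × Fin 2) ℂ :=
  u • (sM ⊗ₖ sM) + sigM ⊗ₖ sigP + sigP ⊗ₖ sigM + (α * u - u⁻¹) • (nM ⊗ₖ sM)
    + (α * u) • (nM ⊗ₖ nM)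

/-- The L-operator `L_{μ j}(u)` acting on the auxiliary space `W_μ = ℂ²` and the `j`-th
quantum factor of `(ℂ²)^{⊗M}` (and as identity on the other quantum factors). -/
def Lsite (α : ℂ) (M : ℕ) (u : ℂ) (j : Fin M) :
    Matrix (Fin 2 × (Fin M → Fin 2)) (Fin 2 × (Fin M → Fin 2)) ℂ :=
  fun p q => Lmat α u (p.1, p.2 j) (q.1, q.2 j) *
    (if ∀ i : Fin M, i ≠ j → p.2 i = q.2 i then 1 else 0)

/-- The monodromy matrix `T_μ(u,{w}) = ∏_{j=1}^M L_{μ j}(u/w_j)` on `W_μ ⊗ (ℂ²)^{⊗M}`. -/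
def monodromy (α : ℂ) (M : ℕ) (w : Fin M → ℂ) (u : ℂ) :
    Matrix (Fin 2 × (Fin M → Fin 2)) (Fin 2 × (Fin M → Fin 2)) ℂ :=
  ((List.finRange M).map (fun j => Lsite α M (u / w j) j)).prod

/-- The transfer matrix `τ(u,{w}) = Tr_{W_μ} T_μ(u,{w})` acting on `(ℂ²)^{⊗M}`. -/
def transfer (α : ℂ) (M : ℕ) (w : Fin M → ℂ) (u : ℂ) :
    Matrix (Fin M → Fin 2) (Fin M → Fin 2) ℂ :=
  fun x y => ∑ a : Fin 2, monodromy α M w u (a, x) (a, y)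

/-!
Entrywise, `τ(u)_{x,y} = tr ∏ⱼ L_j(u)^{x_j}_{y_j}` is the trace of an ordered product of `2 × 2`
auxiliary blocks. Hence `(τ(u) τ(v))_{x,z}` is the trace of the product over `j` of the `4 × 4`
blocks `∑_q L_j(u)^{x_j}_q ⊗ L_j(v)^q_{z_j}`. The RLL relation of the five vertex model says that
the invertible matrix `R(v/u)` conjugates each of these blocks into
`∑_q L_j(u)^q_{z_j} ⊗ L_j(v)^{x_j}_q` (the inhomogeneity cancels in `(v/w_j)/(u/w_j) = v/u`), and
the trace of the product of the latter blocks is `(τ(v) τ(u))_{x,z}`.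
-/

theorem forall_notMem_and_forall_ne_iff {ι S : Type*} [DecidableEq ι] {j : ι} {l : List ι}
    (hj : j ∉ l) (x y z : ι → S) :
    ((∀ i ∉ l, z i = y i) ∧ ∀ i, i ≠ j → x i = z i) ↔
      z = Function.update x j (y j) ∧ ∀ i ∉ j :: l, x i = y i := by
  constructor
  · rintro ⟨hzy, hxz⟩
    refine ⟨funext fun i => ?_, fun i hi => ?_⟩
    · by_cases h : i = j
      · subst h; simpa using hzy i hj
      · simp [h, hxz i h]
    · rw [List.mem_cons, not_or] at hi
      rw [hxz i hi.1, hzy i hi.2]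
  · rintro ⟨rfl, hxy⟩
    refine ⟨fun i hi => ?_, fun i hi => (Function.update_of_ne hi _ _).symm⟩
    by_cases h : i = j
    · subst h; simp
    · simp [h, hxy i (by simp [h, hi])]

theorem List.prod_ofFn_sum {A S : Type*} [Semiring A] [Fintype S] {n : ℕ} (f : Fin n → S → A) :
    (List.ofFn fun j => ∑ t, f j t).prod = ∑ y : Fin n → S, (List.ofFn fun j => f j (y j)).prod := by
  induction n with
  | zero => simp
  | succ n ih =>
    rw [← (Fin.consEquiv fun _ => S).sum_comp, Fintype.sum_prod_type, Finset.sum_comm]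
    simp [List.ofFn_succ, ih, Finset.sum_mul, Finset.mul_sum, Fin.consEquiv]

theorem SemiconjBy.prod_ofFn {G : Type*} [Monoid G] {n : ℕ} {r : G} {a b : Fin n → G}
    (h : ∀ j, SemiconjBy r (a j) (b j)) :
    SemiconjBy r (List.ofFn a).prod (List.ofFn b).prod := by
  induction n with
  | zero => exact SemiconjBy.one_right r
  | succ n ih =>
    simpa only [List.ofFn_succ, List.prod_cons] using (h 0).mul_right (ih fun j => h j.succ)

namespace Matrix

section LocalOperators

variable {ι P S R : Type*}

def slice (X : Matrix (P × S) (P × S) R) (s t : S) : Matrix P P R :=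
  of fun a b => X (a, s) (b, t)

theorem slice_apply (X : Matrix (P × S) (P × S) R) (s t : S) (a b : P) :
    slice X s t a b = X (a, s) (b, t) := rfl

variable [Fintype ι] [DecidableEq ι] [DecidableEq S]

def localOp [MulZeroOneClass R] (X : Matrix (P × S) (P × S) R) (j : ι) :
    Matrix (P × (ι → S)) (P × (ι → S)) R :=
  fun p q => X (p.1, p.2 j) (q.1, q.2 j) * if ∀ i, i ≠ j → p.2 i = q.2 i then (1 : R) else 0

theorem list_prod_map_localOp_apply [Fintype P] [DecidableEq P] [Fintype S] [Semiring R]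
    (X : ι → Matrix (P × S) (P × S) R) {l : List ι} (hl : l.Nodup) (a b : P) (x y : ι → S) :
    (l.map fun j => localOp (X j) j).prod (a, x) (b, y) =
      (l.map fun j => slice (X j) (x j) (y j)).prod a b *
        if ∀ i ∉ l, x i = y i then 1 else 0 := by
  induction l generalizing a x with
  | nil => simp [one_apply, ← ite_and, funext_iff, and_comm]
  | cons j l ih =>
    obtain ⟨hj, hl⟩ := List.nodup_cons.mp hl
    have hupd : (l.map fun i => slice (X i) (Function.update x j (y j) i) (y i)) =
        l.map fun i => slice (X i) (x i) (y i) :=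
      List.map_congr_left fun i hi => by rw [Function.update_of_ne (ne_of_mem_of_not_mem hi hj)]
    simp only [List.map_cons, List.prod_cons, mul_apply, Fintype.sum_prod_type, localOp, ih hl,
      mul_ite, ite_mul, mul_one, mul_zero, zero_mul, ← ite_and]
    simp only [forall_notMem_and_forall_ne_iff hj, ite_and, Finset.sum_ite_eq', Finset.mem_univ,
      if_true, Function.update_self, hupd, Finset.sum_ite_irrel, Finset.sum_const_zero, slice_apply]

end LocalOperators

variable {m n R : Type*} [Fintype m] [Fintype n] [DecidableEq m] [DecidableEq n] [CommSemiring R]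

theorem prod_ofFn_kronecker {k : ℕ} (A : Fin k → Matrix m m R) (B : Fin k → Matrix n n R) :
    (List.ofFn fun j => A j ⊗ₖ B j).prod = (List.ofFn A).prod ⊗ₖ (List.ofFn B).prod := by
  induction k with
  | zero => simp
  | succ k ih => simp [List.ofFn_succ, ih, mul_kronecker_mul]

theorem trace_eq_of_semiconjBy {r a b : Matrix n n R} (hr : IsUnit r) (h : SemiconjBy r a b) :
    trace a = trace b := by
  obtain ⟨r, rfl⟩ := hr
  rw [← trace_units_conj' r b, mul_assoc, ← h.eq, ← mul_assoc, Units.inv_mul, one_mul]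

variable {S : Type*} [Fintype S] {k : ℕ}

def rowTransfer (A : Fin k → S → S → Matrix m m R) : Matrix (Fin k → S) (Fin k → S) R :=
  of fun x y => trace (List.ofFn fun j => A j (x j) (y j)).prod

theorem rowTransfer_mul_apply (A : Fin k → S → S → Matrix m m R)
    (B : Fin k → S → S → Matrix n n R) (x z : Fin k → S) :
    (rowTransfer A * rowTransfer B) x z =
      trace (List.ofFn fun j => ∑ q, A j (x j) q ⊗ₖ B j q (z j)).prod := by
  simp only [rowTransfer, mul_apply, of_apply, List.prod_ofFn_sum, trace_sum, prod_ofFn_kronecker,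
    trace_kronecker]

theorem rowTransfer_commute {A : Fin k → S → S → Matrix m m R} {B : Fin k → S → S → Matrix n n R}
    {r : Matrix (m × n) (m × n) R} (hr : IsUnit r)
    (h : ∀ j s t, SemiconjBy r (∑ q, A j s q ⊗ₖ B j q t) (∑ q, A j q t ⊗ₖ B j s q)) :
    Commute (rowTransfer A) (rowTransfer B) := by
  ext x z
  calc (rowTransfer A * rowTransfer B) x z
      = trace (List.ofFn fun j => ∑ q, A j (x j) q ⊗ₖ B j q (z j)).prod := rowTransfer_mul_apply ..
    _ = trace (List.ofFn fun j => ∑ q, A j q (z j) ⊗ₖ B j (x j) q).prod :=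
        trace_eq_of_semiconjBy hr (SemiconjBy.prod_ofFn fun j => h j (x j) (z j))
    _ = (rowTransfer B * rowTransfer A) x z := by
        simp only [rowTransfer, mul_apply, of_apply, List.prod_ofFn_sum, trace_sum,
          prod_ofFn_kronecker, trace_kronecker, mul_comm]

end Matrix

theorem Lsite_eq_localOp (α : ℂ) (M : ℕ) (u : ℂ) (j : Fin M) :
    Lsite α M u j = localOp (Lmat α u) j := by
  ext p q
  simp only [Lsite, localOp]
  -- the two sides differ only in the `Decidable` instance of the `if`
  congr

theorem transfer_eq_rowTransfer (α : ℂ) (M : ℕ) (w : Fin M → ℂ) (u : ℂ) :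
    transfer α M w u = rowTransfer fun j => slice (Lmat α (u / w j)) := by
  ext x y
  simp only [transfer, monodromy, Lsite_eq_localOp,
    list_prod_map_localOp_apply _ (List.nodup_finRange M), List.mem_finRange, not_true_eq_false,
    IsEmpty.forall_iff, implies_true, if_true, mul_one, rowTransfer, of_apply, trace, diag_apply,
    List.ofFn_eq_map]

def Rmat (k : ℂ) : Matrix (Fin 2 × Fin 2) (Fin 2 × Fin 2) ℂ :=
  sM ⊗ₖ sM + k • (sigP ⊗ₖ sigM + sigM ⊗ₖ sigP) + (1 - k ^ 2) • (nM ⊗ₖ sM) + nM ⊗ₖ nM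

theorem isUnit_Rmat {k : ℂ} (hk : k ≠ 0) : IsUnit (Rmat k) := by
  refine IsUnit.of_mul_eq_one
    (sM ⊗ₖ sM + k⁻¹ • (sigP ⊗ₖ sigM + sigM ⊗ₖ sigP) + (1 - k⁻¹ ^ 2) • (sM ⊗ₖ nM) + nM ⊗ₖ nM) ?_
  ext ⟨i, i'⟩ ⟨j, j'⟩
  fin_cases i <;> fin_cases i' <;> fin_cases j <;> fin_cases j' <;>
    simp [Rmat, mul_apply, Fintype.sum_prod_type, sM, nM, sigP, sigM, hk]
  field_simp
  ring

/-- The RLL relation `R₁₂(b/a) L₁₃(a) L₂₃(b) = L₂₃(b) L₁₃(a) R₁₂(b/a)`, read off blockwise in the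
quantum indices `s, t` of the third factor. -/
theorem Lmat_rll (α a b : ℂ) (ha : a ≠ 0) (hb : b ≠ 0) (s t : Fin 2) :
    SemiconjBy (Rmat (b / a)) (∑ q, slice (Lmat α a) s q ⊗ₖ slice (Lmat α b) q t)
      (∑ q, slice (Lmat α a) q t ⊗ₖ slice (Lmat α b) s q) := by
  ext ⟨i, i'⟩ ⟨j, j'⟩
  simp only [mul_apply, Fintype.sum_prod_type, Fin.sum_univ_two, kroneckerMap_apply, slice_apply,
    Rmat, Lmat, Matrix.add_apply, Matrix.smul_apply, smul_eq_mul, sM, nM, sigP, sigM, of_apply,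
    cons_val', cons_val_zero, cons_val_one, empty_val', cons_val_fin_one]
  fin_cases s <;> fin_cases t <;> fin_cases i <;> fin_cases i' <;> fin_cases j <;> fin_cases j' <;>
    simp <;> field_simp <;> ring

theorem transfer_matrices_commute_general (α : ℂ) (M : ℕ)
    (w : Fin M → ℂ) (hw : ∀ j, w j ≠ 0) (u v : ℂ) (hu : u ≠ 0) (hv : v ≠ 0) :
    transfer α M w u * transfer α M w v = transfer α M w v * transfer α M w u := by
  rw [transfer_eq_rowTransfer, transfer_eq_rowTransfer]
  refine (rowTransfer_commute (isUnit_Rmat (div_ne_zero hv hu)) fun j s t => ?_).eq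
  simpa only [div_div_div_cancel_right₀ (hw j)] using
    Lmat_rll α (u / w j) (v / w j) (div_ne_zero hu (hw j)) (div_ne_zero hv (hw j)) s t

/-- The transfer matrices of the five vertex model commute:
`τ(u,{w}) τ(v,{w}) = τ(v,{w}) τ(u,{w})`. -/
theorem transfer_matrices_commute (α : ℂ) (M : ℕ) (hM : 1 ≤ M)
    (w : Fin M → ℂ) (hw : ∀ j, w j ≠ 0) (u v : ℂ) (hu : u ≠ 0) (hv : v ≠ 0) :
    transfer α M w u * transfer α M w v = transfer α M w v * transfer α M w u :=
  transfer_matrices_commute_general α M w hw u v hu hv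

end
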